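/- arXiv:0709.1490 — 6 statements merged into one kernel-verified Lean document; each statement's English description precedes it below -/
import Mathlib

section
/- Let w : ℝⁿ → ℝ be a convex function attaining its minimum m = w(x₀) at a point x₀, and let R' > 0 be such that w(x) ≥ m + 1 for all x with ‖x − x₀‖ = R'. Then for every x with ‖x − x₀‖ ≥ R' at which w is differentiable, one has ‖∇w(x)‖ ≥ 1/R'. -/
/-!
Along the ray from `x₀` through `x`, convexity makes `w` grow at least linearly past the sphere:
`w` rises by `1` over the distance `R'`, so `w x - w x₀ ≥ ‖x - x₀‖ / R'`. The first-order
characterization of convexity bounds this increment by `⟪∇w x, x - x₀⟫ ≤ ‖∇w x‖ ‖x - x₀‖`.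
-/

open scoped InnerProductSpace

theorem ConvexOn.sub_le_of_hasFDerivAt {E : Type*} [NormedAddCommGroup E] [NormedSpace ℝ E]
    {s : Set E} {f : E → ℝ} {f' : E →L[ℝ] ℝ} {x y : E} (hf : ConvexOn ℝ s f)
    (hx : x ∈ s) (hy : y ∈ s) (hf' : HasFDerivAt f f' x) : f x - f y ≤ f' (x - y) := by
  let ℓ : ℝ →ᵃ[ℝ] E := AffineMap.lineMap y x
  have hℓ : HasDerivAt (f ∘ ℓ) (f' (x - y)) 1 := by
    have hℓ1 : ℓ 1 = x := AffineMap.lineMap_apply_one y x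
    exact (hℓ1 ▸ hf').comp_hasDerivAt 1 AffineMap.hasDerivAt_lineMap
  have hslope := (hf.comp_affineMap ℓ).slope_le_of_hasDerivAt
    (by simpa [ℓ] using hy) (by simpa [ℓ] using hx) one_pos hℓ
  simpa [slope_def_field, ℓ] using hslope

theorem ConvexOn.sub_le_inner_of_hasGradientAt {E : Type*} [NormedAddCommGroup E]
    [InnerProductSpace ℝ E] [CompleteSpace E] {s : Set E} {f : E → ℝ} {f' x y : E}
    (hf : ConvexOn ℝ s f) (hx : x ∈ s) (hy : y ∈ s) (hf' : HasGradientAt f f' x) :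
    f x - f y ≤ ⟪f', x - y⟫_ℝ := by
  simpa using hf.sub_le_of_hasFDerivAt hx hy hf'.hasFDerivAt

theorem ConvexOn.mul_sub_le_of_le_on_sphere {E : Type*} [NormedAddCommGroup E] [NormedSpace ℝ E]
    {s : Set E} {f : E → ℝ} {x₀ x : E} {R δ : ℝ} (hf : ConvexOn ℝ s f) (hx₀ : x₀ ∈ s) (hx : x ∈ s)
    (hR : 0 < R) (hRx : R ≤ ‖x - x₀‖) (hsphere : ∀ y, ‖y - x₀‖ = R → f x₀ + δ ≤ f y) :
    δ * ‖x - x₀‖ ≤ R * (f x - f x₀) := by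
  have hpos : 0 < ‖x - x₀‖ := hR.trans_le hRx
  set t := R / ‖x - x₀‖
  have ht : 0 < t := div_pos hR hpos
  have ht1 : t ≤ 1 := (div_le_one hpos).2 hRx
  have hy : ‖AffineMap.lineMap x₀ x t - x₀‖ = R := by
    rw [← vsub_eq_sub, AffineMap.lineMap_vsub_left, norm_smul, Real.norm_of_nonneg ht.le,
      vsub_eq_sub, div_mul_cancel₀ R hpos.ne']
  have hconv : f (AffineMap.lineMap x₀ x t) ≤ (1 - t) * f x₀ + t * f x := by
    simpa [AffineMap.lineMap_apply_module] using
      hf.2 hx₀ hx (by linarith) ht.le (by ring)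
  have hδ : δ ≤ t * (f x - f x₀) := by linarith [hsphere _ hy]
  calc δ * ‖x - x₀‖ ≤ t * (f x - f x₀) * ‖x - x₀‖ := by gcongr
    _ = R * (f x - f x₀) := by rw [mul_right_comm, div_mul_cancel₀ R hpos.ne']

theorem convex_gradient_lower_bound_general (n : ℕ) (w : EuclideanSpace ℝ (Fin n) → ℝ)
    (hconv : ConvexOn ℝ Set.univ w) (x₀ : EuclideanSpace ℝ (Fin n))
    (R' : ℝ) (hR' : 0 < R')
    (hsphere : ∀ x, ‖x - x₀‖ = R' → w x₀ + 1 ≤ w x) :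
    ∀ x, R' ≤ ‖x - x₀‖ → DifferentiableAt ℝ w x → 1 / R' ≤ ‖gradient w x‖ := by
  intro x hRx hdiff
  have hgrowth : 1 * ‖x - x₀‖ ≤ R' * (w x - w x₀) :=
    hconv.mul_sub_le_of_le_on_sphere trivial trivial hR' hRx hsphere
  have hfirst : w x - w x₀ ≤ ⟪gradient w x, x - x₀⟫_ℝ :=
    hconv.sub_le_inner_of_hasGradientAt trivial trivial hdiff.hasGradientAt
  rw [div_le_iff₀' hR']
  refine le_of_mul_le_mul_right ?_ (hR'.trans_le hRx)
  calc 1 * ‖x - x₀‖ ≤ R' * (w x - w x₀) := hgrowth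
    _ ≤ R' * (‖gradient w x‖ * ‖x - x₀‖) := by
      gcongr
      exact hfirst.trans (real_inner_le_norm _ _)
    _ = R' * ‖gradient w x‖ * ‖x - x₀‖ := by ring

/-- Gradient lower bound for a convex function outside a ball around its minimum point:
if `w` is convex with minimum `m = w(x₀)` and `w ≥ m + 1` on the sphere of radius `R'`
about `x₀`, then `‖∇w(x)‖ ≥ 1/R'` at every point `x` with `‖x − x₀‖ ≥ R'` where `w`
is differentiable. -/
theorem convex_gradient_lower_bound (n : ℕ) (w : EuclideanSpace ℝ (Fin n) → ℝ)
    (hconv : ConvexOn ℝ Set.univ w) (x₀ : EuclideanSpace ℝ (Fin n))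
    (hmin : ∀ x, w x₀ ≤ w x) (R' : ℝ) (hR' : 0 < R')
    (hsphere : ∀ x, ‖x - x₀‖ = R' → w x₀ + 1 ≤ w x) :
    ∀ x, R' ≤ ‖x - x₀‖ → DifferentiableAt ℝ w x → 1 / R' ≤ ‖gradient w x‖ :=
  convex_gradient_lower_bound_general n w hconv x₀ R' hR' hsphere
end

section
/- Let w : ℝⁿ → ℝ be a convex function attaining its minimum m = w(x₀) at a point x₀, and let R' > 0 be such that w(x) ≥ m + 1 for all x with ‖x − x₀‖ = R'. Then for every R ≥ R' one has ∫_{{x : ‖x − x₀‖ ≥ R}} exp(−w(x)) dx ≤ exp(−m) · ∫_{{y : ‖y‖ ≥ R}} exp(−‖y‖/R') dy; in particular, for every ε > 0 there is R_ε depending only on n, R' and a lower bound for m such that ∫_{{x : ‖x − x₀‖ ≥ R_ε}} exp(−w(x)) dx < ε. -/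
/-!
By convexity, the slope of `w` along any ray from `x₀` beyond the sphere of radius `R'` is at
least `1 / R'`, so `w x ≥ m + ‖x - x₀‖ / R'` outside that ball. Hence `e^{-w}` is dominated there
by `e^{-m} e^{-‖x - x₀‖ / R'}`, and translating by `x₀` gives the first bound. For the second, the
tails of the integrable function `e^{-‖y‖ / R'}` tend to `0`, and `e^{-m} ≤ e^{-m₀}`.
-/

open MeasureTheory Filter Topology Set

theorem ConvexOn.add_mul_norm_sub_div_le {E : Type*} [NormedAddCommGroup E] [NormedSpace ℝ E]
    {w : E → ℝ} (hw : ConvexOn ℝ univ w) {x₀ : E} {r c : ℝ} (hr : 0 < r)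
    (hsphere : ∀ x, ‖x - x₀‖ = r → w x₀ + c ≤ w x) {x : E} (hx : r ≤ ‖x - x₀‖) :
    w x₀ + c * (‖x - x₀‖ / r) ≤ w x := by
  have hd : 0 < ‖x - x₀‖ := hr.trans_le hx
  set t := r / ‖x - x₀‖
  have ht : 0 < t := div_pos hr hd
  have hsphere_pt : ‖((1 - t) • x₀ + t • x) - x₀‖ = r := by
    rw [show (1 - t) • x₀ + t • x - x₀ = t • (x - x₀) by module, norm_smul,
      Real.norm_of_nonneg ht.le, div_mul_cancel₀ _ hd.ne']
  have hconv : w ((1 - t) • x₀ + t • x) ≤ (1 - t) * w x₀ + t * w x :=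
    hw.2 (mem_univ _) (mem_univ _) (by rw [sub_nonneg]; exact (div_le_one hd).2 hx) ht.le
      (by ring)
  have hslope : c ≤ t * (w x - w x₀) := by linarith [hsphere _ hsphere_pt]
  have hgrowth : c * (‖x - x₀‖ / r) ≤ w x - w x₀ :=
    calc c * (‖x - x₀‖ / r) ≤ t * (w x - w x₀) * (‖x - x₀‖ / r) := by gcongr
      _ = w x - w x₀ := by simp only [t]; field_simp
  linarith [hgrowth]

theorem tendsto_setIntegral_le_norm_atTop {E F : Type*} [NormedAddCommGroup E]
    [MeasurableSpace E] [OpensMeasurableSpace E] [NormedAddCommGroup F] [NormedSpace ℝ F]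
    {μ : Measure E} {f : E → F} (hf : Integrable f μ) :
    Tendsto (fun R : ℝ => ∫ x in {x | R ≤ ‖x‖}, f x ∂μ) atTop (𝓝 0) := by
  have hempty : ⋂ R : ℝ, {x : E | R ≤ ‖x‖} = ∅ :=
    eq_empty_of_forall_notMem fun x hx => absurd (mem_iInter.1 hx (‖x‖ + 1)) (by simp)
  simpa [hempty] using tendsto_setIntegral_of_antitone (s := fun R : ℝ => {x : E | R ≤ ‖x‖})
    (fun R => (isClosed_le continuous_const continuous_norm).measurableSet)
    (fun R R' h x hx => h.trans hx) ⟨0, hf.integrableOn⟩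

theorem setIntegral_le_norm_sub_comp_sub {E F : Type*} [NormedAddCommGroup E]
    [MeasurableSpace E] [MeasurableAdd E] [NormedAddCommGroup F] [NormedSpace ℝ F]
    (μ : Measure E) [μ.IsAddRightInvariant] (g : E → F) (x₀ : E) (R : ℝ) :
    ∫ x in {x | R ≤ ‖x - x₀‖}, g (x - x₀) ∂μ = ∫ y in {y | R ≤ ‖y‖}, g y ∂μ :=
  (measurePreserving_sub_right μ x₀).setIntegral_preimage_emb
    (measurableEmbedding_subRight x₀) g {y | R ≤ ‖y‖}

section AddHaar

variable {E : Type*} [NormedAddCommGroup E] [NormedSpace ℝ E] [FiniteDimensional ℝ E]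
  [MeasurableSpace E] [BorelSpace E] (μ : Measure E) [μ.IsAddHaarMeasure]

theorem integrable_exp_neg_norm_div {r : ℝ} (hr : 0 < r) :
    Integrable (fun x : E => Real.exp (-(‖x‖ / r))) μ := by
  set d : ℝ := Module.finrank ℝ E + 1
  have hdecay : (fun t : ℝ => Real.exp (-(t / r))) =O[atTop] fun t => (1 + t) ^ (-d) := by
    have := (isLittleO_exp_neg_mul_rpow_atTop (inv_pos.2 hr) (-d)).comp_tendsto
      (tendsto_atTop_add_const_left _ 1 tendsto_id)
    refine (this.isBigO.const_mul_left (Real.exp r⁻¹)).congr_left fun t => ?_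
    rw [Function.comp_apply, id, ← Real.exp_add]
    ring_nf
  exact (Continuous.locallyIntegrable (by fun_prop)).integrable_of_isBigO_cocompact
    (hdecay.comp_tendsto tendsto_norm_cocompact_atTop)
    ((integrable_one_add_norm (by linarith)).integrableAtFilter _)

theorem setIntegral_exp_neg_le_of_convexOn {w : E → ℝ} (hw : ConvexOn ℝ univ w) {x₀ : E}
    {r R : ℝ} (hr : 0 < r) (hsphere : ∀ x, ‖x - x₀‖ = r → w x₀ + 1 ≤ w x) (hR : r ≤ R) :
    ∫ x in {x | R ≤ ‖x - x₀‖}, Real.exp (-(w x)) ∂μ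
      ≤ Real.exp (-(w x₀)) * ∫ y in {y | R ≤ ‖y‖}, Real.exp (-(‖y‖ / r)) ∂μ := by
  have hbound : ∀ x ∈ {x | R ≤ ‖x - x₀‖},
      Real.exp (-(w x)) ≤ Real.exp (-(w x₀)) * Real.exp (-(‖x - x₀‖ / r)) := by
    intro x hx
    have hgrowth := hw.add_mul_norm_sub_div_le hr hsphere (hR.trans hx)
    rw [← Real.exp_add, Real.exp_le_exp]
    linarith
  have hint : Integrable (fun x => Real.exp (-(w x₀)) * Real.exp (-(‖x - x₀‖ / r))) μ :=
    ((integrable_exp_neg_norm_div μ hr).comp_sub_right x₀).const_mul _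
  calc ∫ x in {x | R ≤ ‖x - x₀‖}, Real.exp (-(w x)) ∂μ
      ≤ ∫ x in {x | R ≤ ‖x - x₀‖}, Real.exp (-(w x₀)) * Real.exp (-(‖x - x₀‖ / r)) ∂μ :=
        integral_mono_of_nonneg (.of_forall fun _ => (Real.exp_pos _).le) hint.integrableOn
          (ae_restrict_of_forall_mem
            (isClosed_le continuous_const (by fun_prop)).measurableSet hbound)
    _ = Real.exp (-(w x₀)) * ∫ y in {y | R ≤ ‖y‖}, Real.exp (-(‖y‖ / r)) ∂μ := by
        rw [integral_const_mul,
          setIntegral_le_norm_sub_comp_sub μ (fun y => Real.exp (-(‖y‖ / r)))]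

end AddHaar

/-- Uniform exponential tail estimate for `e^{−w}` outside large balls, for a convex
function `w` with minimum `m = w(x₀)` which is `≥ m + 1` on the sphere of radius `R'`
about `x₀`: for every `R ≥ R'`,
`∫_{‖x−x₀‖≥R} e^{−w} ≤ e^{−m} ∫_{‖y‖≥R} e^{−‖y‖/R'} dy`, and for every `ε > 0` there is
`R_ε` depending only on `n`, `R'` and a lower bound `m₀` for `m` such that the tail
integral over `‖x − x₀‖ ≥ R_ε` is `< ε`. -/
theorem convex_tail_estimate (n : ℕ) (R' : ℝ) (hR' : 0 < R') :
    (∀ (w : EuclideanSpace ℝ (Fin n) → ℝ) (x₀ : EuclideanSpace ℝ (Fin n)),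
      ConvexOn ℝ Set.univ w → (∀ x, w x₀ ≤ w x) →
      (∀ x, ‖x - x₀‖ = R' → w x₀ + 1 ≤ w x) →
      ∀ R : ℝ, R' ≤ R →
        (∫ x in {x : EuclideanSpace ℝ (Fin n) | R ≤ ‖x - x₀‖}, Real.exp (-(w x)))
          ≤ Real.exp (-(w x₀)) *
            ∫ y in {y : EuclideanSpace ℝ (Fin n) | R ≤ ‖y‖}, Real.exp (-(‖y‖ / R'))) ∧
    (∀ ε : ℝ, 0 < ε → ∀ m₀ : ℝ, ∃ Rε : ℝ, 0 < Rε ∧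
      ∀ (w : EuclideanSpace ℝ (Fin n) → ℝ) (x₀ : EuclideanSpace ℝ (Fin n)),
        ConvexOn ℝ Set.univ w → (∀ x, w x₀ ≤ w x) →
        (∀ x, ‖x - x₀‖ = R' → w x₀ + 1 ≤ w x) → m₀ ≤ w x₀ →
        (∫ x in {x : EuclideanSpace ℝ (Fin n) | Rε ≤ ‖x - x₀‖}, Real.exp (-(w x))) < ε) := by
  refine ⟨fun w x₀ hw _ hsphere R hR => setIntegral_exp_neg_le_of_convexOn _ hw hR' hsphere hR,
    fun ε hε m₀ => ?_⟩
  set tail := fun R : ℝ =>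
    ∫ y in {y : EuclideanSpace ℝ (Fin n) | R ≤ ‖y‖}, Real.exp (-(‖y‖ / R'))
  have htail : Tendsto (fun R => Real.exp (-m₀) * tail R) atTop (𝓝 0) := by
    simpa using (tendsto_setIntegral_le_norm_atTop
      (integrable_exp_neg_norm_div volume hR')).const_mul (Real.exp (-m₀))
  obtain ⟨R, hRε, hR⟩ := ((htail.eventually_lt_const hε).and (eventually_ge_atTop R')).exists
  refine ⟨R, hR'.trans_le hR, fun w x₀ hw _ hsphere hm₀ => ?_⟩
  calc _ ≤ Real.exp (-(w x₀)) * tail R := setIntegral_exp_neg_le_of_convexOn _ hw hR' hsphere hR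
    _ ≤ Real.exp (-m₀) * tail R := by gcongr
    _ < ε := hRε
end

section
/- Let n ≥ 1 and let w : ℝⁿ → ℝ be a convex function that is Lipschitz with constant D > 0, attains its minimum m = w(x₀) at a point x₀, and satisfies ∫_{ℝⁿ} exp(−w(x)) dx ≤ K for some K > 0. Then there exists R' > 0, depending only on n, D, K and an upper bound for m (in particular independent of w itself beyond these data), such that w(x) ≥ m + 1 for every x with ‖x − x₀‖ ≥ R'. -/
/-!
If `w x < w x₀ + 1` with `‖x - x₀‖ ≥ 2N/D`, convexity keeps `w ≤ w x₀ + 1 ≤ m₁ + 1` on the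
segment `[x₀, x]`, and the Lipschitz bound gives `w ≤ m₁ + 2` on the `N` pairwise disjoint balls
of radius `1/D` centred at the points `x₀ + (k/N)(x - x₀)`, `k < N`. Hence
`∫ e^{-w} ≥ N · vol(B(0, 1/D)) · e^{-(m₁+2)}`, which exceeds `K` once `N` is large in terms of
`n, D, K, m₁` only.
-/

open MeasureTheory Metric AffineMap Finset Real

theorem pairwiseDisjoint_ball_lineMap {E : Type*} [NormedAddCommGroup E] [NormedSpace ℝ E]
    {x y : E} {ρ : ℝ} {N : ℕ} (h : 2 * ρ * N ≤ dist x y) :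
    (range N : Set ℕ).PairwiseDisjoint fun k => ball (lineMap x y ((k : ℝ) / N)) ρ := by
  intro j hj k _ hjk
  have hN : (0 : ℝ) < N := by
    exact_mod_cast Nat.pos_of_ne_zero (by rintro rfl; simp at hj)
  have hjk' : (1 : ℝ) ≤ |(j : ℝ) - k| := by
    exact_mod_cast Int.one_le_abs (sub_ne_zero.mpr (by exact_mod_cast hjk : (j : ℤ) ≠ k))
  apply ball_disjoint_ball
  rw [dist_lineMap_lineMap, Real.dist_eq, ← sub_div, abs_div, abs_of_pos hN, div_mul_eq_mul_div,
    le_div_iff₀ hN]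
  nlinarith [dist_nonneg (x := x) (y := y)]

theorem mul_card_mul_measureReal_ball_le_integral {E ι : Type*} [NormedAddCommGroup E]
    [ProperSpace E] [MeasurableSpace E] [BorelSpace E] (μ : Measure E) [μ.IsAddHaarMeasure]
    {f : E → ℝ} (hf : Integrable f μ) (hf0 : 0 ≤ᵐ[μ] f) {s : Finset ι} {c : ι → E} {ρ a : ℝ}
    (hd : (s : Set ι).PairwiseDisjoint fun i => ball (c i) ρ)
    (ha : ∀ i ∈ s, ∀ z ∈ ball (c i) ρ, a ≤ f z) :
    a * (#s * μ.real (ball 0 ρ)) ≤ ∫ z, f z ∂μ := by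
  set U := ⋃ i ∈ s, ball (c i) ρ
  have hU : MeasurableSet U := s.measurableSet_biUnion fun _ _ => measurableSet_ball
  have hμU : μ.real U = #s * μ.real (ball 0 ρ) := by
    rw [measureReal_biUnion_finset hd (fun _ _ => measurableSet_ball)]
    simp [Measure.addHaar_real_ball_center]
  have haU : ∀ z ∈ U, a ≤ f z := by
    simp only [U, Set.mem_iUnion]
    rintro z ⟨i, hi, hz⟩
    exact ha i hi z hz
  calc a * (#s * μ.real (ball 0 ρ)) = a * μ.real U := by rw [hμU]
    _ ≤ ∫ z in U, f z ∂μ :=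
      setIntegral_ge_of_const_le_real hU (measure_biUnion_lt_top s.finite_toSet
        fun _ _ => measure_ball_lt_top).ne haU hf.integrableOn
    _ ≤ ∫ z, f z ∂μ := setIntegral_le_integral hf hf0

theorem uniform_sublevel_localization_general (n : ℕ) (D K m₁ : ℝ)
    (hD : 0 < D) :
    ∃ R' : ℝ, 0 < R' ∧
      ∀ (w : EuclideanSpace ℝ (Fin n) → ℝ) (x₀ : EuclideanSpace ℝ (Fin n)),
        ConvexOn ℝ Set.univ w →
        (∀ x y, |w x - w y| ≤ D * ‖x - y‖) →
        (∀ x, w x₀ ≤ w x) →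
        Integrable (fun x => Real.exp (-(w x))) volume →
        (∫ x, Real.exp (-(w x))) ≤ K →
        w x₀ ≤ m₁ →
        ∀ x, R' ≤ ‖x - x₀‖ → w x₀ + 1 ≤ w x := by
  set v := volume.real (ball (0 : EuclideanSpace ℝ (Fin n)) D⁻¹)
  have hv : 0 < v :=
    ENNReal.toReal_pos (measure_ball_pos volume 0 (inv_pos.mpr hD)).ne' measure_ball_lt_top.ne
  set N := ⌊K * exp (m₁ + 2) / v⌋₊ + 1
  refine ⟨2 * D⁻¹ * N, by positivity, fun w x₀ hconv hlip _ hint hK hm₁ x hx => ?_⟩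
  by_contra! hlt
  have hsegment (k : ℕ) (hk : k ∈ range N) : w (lineMap x₀ x ((k : ℝ) / N)) ≤ m₁ + 1 := by
    have hkN : (k : ℝ) ≤ N := by exact_mod_cast (mem_range.mp hk).le
    have ht : (k : ℝ) / N ∈ Set.Icc (0 : ℝ) 1 :=
      ⟨by positivity, div_le_one_of_le₀ hkN (by positivity)⟩
    exact (hconv.le_on_segment trivial trivial (lineMap_mem_segment ℝ x₀ x ht)).trans
      (max_le (by linarith) (by linarith))
  have hballs : ∀ k ∈ range N, ∀ z ∈ ball (lineMap x₀ x ((k : ℝ) / N)) D⁻¹,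
      exp (-(m₁ + 2)) ≤ exp (-w z) := by
    intro k hk z hz
    have hLip := (abs_le.mp (hlip z (lineMap x₀ x ((k : ℝ) / N)))).2
    have hDz : D * ‖z - lineMap x₀ x ((k : ℝ) / N)‖ < 1 :=
      (mul_lt_mul_of_pos_left (mem_ball_iff_norm.mp hz) hD).trans_eq (mul_inv_cancel₀ hD.ne')
    have := hsegment k hk
    exact exp_le_exp.mpr (by linarith)
  have hlower := mul_card_mul_measureReal_ball_le_integral volume hint
    (Filter.Eventually.of_forall fun z => (exp_pos (-w z)).le)
    (pairwiseDisjoint_ball_lineMap (by rwa [dist_comm, dist_eq_norm])) hballs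
  have hNv : (N : ℝ) * v ≤ K * exp (m₁ + 2) := by
    have := hlower.trans hK
    rwa [card_range, exp_neg, inv_mul_le_iff₀ (exp_pos _), mul_comm (exp _)] at this
  exact (Nat.lt_floor_add_one _).not_ge (by exact_mod_cast (le_div_iff₀ hv).mpr hNv)

/-- Uniform localization of the sublevel set `{w ≤ m + 1}`: for `n ≥ 1` there is a
radius `R' > 0`, depending only on `n`, the Lipschitz constant `D`, the integral bound
`K` and an upper bound `m₁` for the minimum `m = w(x₀)`, such that every convex
`D`-Lipschitz function `w` with minimum `m ≤ m₁` attained at `x₀` and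
`∫ e^{−w} ≤ K` satisfies `w(x) ≥ m + 1` for all `‖x − x₀‖ ≥ R'`. -/
theorem uniform_sublevel_localization (n : ℕ) (hn : 1 ≤ n) (D K m₁ : ℝ)
    (hD : 0 < D) (hK : 0 < K) :
    ∃ R' : ℝ, 0 < R' ∧
      ∀ (w : EuclideanSpace ℝ (Fin n) → ℝ) (x₀ : EuclideanSpace ℝ (Fin n)),
        ConvexOn ℝ Set.univ w →
        (∀ x y, |w x - w y| ≤ D * ‖x - y‖) →
        (∀ x, w x₀ ≤ w x) →
        Integrable (fun x => Real.exp (-(w x))) volume →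
        (∫ x, Real.exp (-(w x))) ≤ K →
        w x₀ ≤ m₁ →
        ∀ x, R' ≤ ‖x - x₀‖ → w x₀ + 1 ≤ w x :=
  uniform_sublevel_localization_general n D K m₁ hD
end

section
/- Let n ≥ 1, let Ω ⊂ ℝⁿ be a bounded convex open set, let y₀ ∈ Ω and r > 0 with the open ball B(y₀, r) contained in Ω. Let w be continuous on the closure of Ω, convex and C² on Ω, and suppose det D²w(y) ≥ λ for all y ∈ Ω, where λ > 0. Then w(y₀) ≤ sup_{y ∈ ∂Ω} w(y) − (1/2) λ^{1/n} r². -/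
/-!
For `0 ≤ c` with `cⁿ < λ`, the function `u = w - (c/2)‖· - y₀‖²` has no local maximum in `Ω`:
at one, `D²w ≤ c·I` along every line, while convexity gives `D²w ≥ 0`, so that
`det D²w ≤ cⁿ < λ`. Hence `u` attains its maximum over the compact `closure Ω` at some `z ∈ ∂Ω`,
and `z ∉ B(y₀, r)`, so `w y₀ = u y₀ ≤ u z ≤ sup_{∂Ω} w - (c/2) r²`. The bound for
`c = λ^{1/n}`, where the determinant argument gives no contradiction, follows by letting
`c ↑ λ^{1/n}`.
-/

/-- The determinant of the Hessian matrix `D²w(y)` of a function `w : ℝⁿ → ℝ`. -/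
noncomputable def hessDet {n : ℕ} (w : EuclideanSpace ℝ (Fin n) → ℝ)
    (x : EuclideanSpace ℝ (Fin n)) : ℝ :=
  (Matrix.of fun i j : Fin n =>
    fderiv ℝ (fun y => fderiv ℝ w y (EuclideanSpace.single j 1)) x
      (EuclideanSpace.single i 1)).det

open Set Filter Topology Metric

theorem IsLocalMax.second_deriv_nonpos {f f' : ℝ → ℝ} {a m : ℝ} (hmax : IsLocalMax f a)
    (hf : ∀ᶠ t in 𝓝 a, HasDerivAt f (f' t) t) (hf' : HasDerivAt f' m a) : m ≤ 0 := by
  -- If `0 < m`, then `f'` vanishes at `a` and is positive just to its right, where `f` increases.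
  by_contra! hm
  have hf'a : f' a = 0 := hmax.hasDerivAt_eq_zero hf.self_of_nhds
  have hpos : ∀ᶠ t in 𝓝[>] a, 0 < f' t := by
    filter_upwards [nhdsGT_le_nhdsNE a <|
      (hasDerivAt_iff_tendsto_slope.1 hf').eventually (eventually_gt_nhds hm),
      self_mem_nhdsWithin] with t hslope hat
    exact pos_of_slope_pos hat hslope hf'a
  obtain ⟨b, hab, hb⟩ := (nhdsGT_basis a).eventually_iff.mp
    (hpos.and (nhdsWithin_le_nhds (hf.and hmax)))
  have hmono : StrictMonoOn f (Ico a b) := by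
    refine strictMonoOn_of_deriv_pos (convex_Ico a b) (fun t ht => ?_) (fun t ht => ?_)
    · rcases ht.1.eq_or_lt with rfl | hat
      · exact hf.self_of_nhds.continuousAt.continuousWithinAt
      · exact (hb ⟨hat, ht.2⟩).2.1.continuousAt.continuousWithinAt
    · rw [interior_Ico] at ht
      rw [(hb ht).2.1.deriv]
      exact (hb ht).1
  have hmid : (a + b) / 2 ∈ Ioo a b := ⟨by linarith, by linarith⟩
  exact (hmono ⟨le_rfl, hab⟩ (Ioo_subset_Ico_self hmid) hmid.1).not_ge (hb hmid).2.2

theorem ConvexOn.second_deriv_nonneg {s : Set ℝ} {f f' : ℝ → ℝ} {a m : ℝ} (hconv : ConvexOn ℝ s f)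
    (hs : s ∈ 𝓝 a) (hf : ∀ᶠ t in 𝓝 a, HasDerivAt f (f' t) t) (hf' : HasDerivAt f' m a) :
    0 ≤ m := by
  obtain ⟨l, u, hau, hsub⟩ := (hf.and hs).exists_Ioo_subset
  have hmono : MonotoneOn f' (Ioo l u) := by
    intro x hx y hy hxy
    have := (hconv.subset (fun t ht => (hsub ht).2) (convex_Ioo l u)).monotoneOn_deriv
      (fun t ht => (hsub ht).1.differentiableAt) hx hy hxy
    rwa [(hsub hx).1.deriv, (hsub hy).1.deriv] at this
  refine ge_of_tendsto (hasDerivAt_iff_tendsto_slope.1 hf') ?_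
  filter_upwards [nhdsWithin_le_nhds (Ioo_mem_nhds hau.1 hau.2)] with t ht
  exact hmono.slope_nonneg hau ht

section SecondDerivative

variable {E : Type*} [NormedAddCommGroup E] [NormedSpace ℝ E] {f : E → ℝ} {f' : E → E →L[ℝ] ℝ}
  {B : E →L[ℝ] E →L[ℝ] ℝ} {z : E}

theorem tendsto_line_nhds_zero (z v : E) : Tendsto (fun t : ℝ => z + t • v) (𝓝 0) (𝓝 z) :=
  (by fun_prop : Continuous fun t : ℝ => z + t • v).tendsto' 0 z (by simp)

theorem eventually_hasDerivAt_comp_line (hf : ∀ᶠ y in 𝓝 z, HasFDerivAt f (f' y) y) (v : E) :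
    ∀ᶠ t in 𝓝 (0 : ℝ), HasDerivAt (fun t => f (z + t • v)) (f' (z + t • v) v) t := by
  filter_upwards [tendsto_line_nhds_zero z v |>.eventually hf] with t ht
  exact ht.comp_hasDerivAt t
    (((hasDerivAt_id t).smul_const v).const_add z |>.congr_deriv (one_smul ℝ v))

theorem hasDerivAt_apply_comp_line (hB : HasFDerivAt f' B z) (v : E) :
    HasDerivAt (fun t : ℝ => f' (z + t • v) v) (B v v) 0 := by
  have hline : HasDerivAt (fun t : ℝ => z + t • v) v 0 :=
    ((hasDerivAt_id (0 : ℝ)).smul_const v).const_add z |>.congr_deriv (one_smul ℝ v)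
  simpa using (hB.comp_hasDerivAt_of_eq 0 hline (by simp)).clm_apply (hasDerivAt_const 0 v)

theorem IsLocalMax.second_fderiv_self_nonpos (hmax : IsLocalMax f z)
    (hf : ∀ᶠ y in 𝓝 z, HasFDerivAt f (f' y) y) (hB : HasFDerivAt f' B z) (v : E) : B v v ≤ 0 := by
  have hline : IsLocalMax (fun t : ℝ => f (z + t • v)) 0 := by
    simpa [IsLocalMax, IsMaxFilter] using (tendsto_line_nhds_zero z v).eventually hmax
  exact hline.second_deriv_nonpos (eventually_hasDerivAt_comp_line hf v)
    (hasDerivAt_apply_comp_line hB v)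

theorem ConvexOn.second_fderiv_self_nonneg {s : Set E} (hconv : ConvexOn ℝ s f) (hs : s ∈ 𝓝 z)
    (hf : ∀ᶠ y in 𝓝 z, HasFDerivAt f (f' y) y) (hB : HasFDerivAt f' B z) (v : E) : 0 ≤ B v v :=
  ((hconv.translate_right z).comp_linearMap (LinearMap.toSpanSingleton ℝ E v)).second_deriv_nonneg
    (tendsto_line_nhds_zero z v hs) (eventually_hasDerivAt_comp_line hf v)
    (hasDerivAt_apply_comp_line hB v)

theorem IsLocalMax.second_fderiv_self_le_of_sub_sq_norm {F : Type*} [NormedAddCommGroup F]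
    [InnerProductSpace ℝ F] {f : F → ℝ} {f' : F → F →L[ℝ] ℝ} {B : F →L[ℝ] F →L[ℝ] ℝ} {z y₀ : F}
    {c : ℝ} (hmax : IsLocalMax (fun y => f y - c / 2 * ‖y - y₀‖ ^ 2) z)
    (hf : ∀ᶠ y in 𝓝 z, HasFDerivAt f (f' y) y) (hB : HasFDerivAt f' B z) (v : F) :
    B v v ≤ c * ‖v‖ ^ 2 := by
  have hquad : ∀ y, HasFDerivAt (fun y => c / 2 * ‖y - y₀‖ ^ 2) (c • innerSL ℝ (y - y₀)) y := by
    intro y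
    refine (((hasFDerivAt_id y).sub_const y₀).norm_sq.const_mul (c / 2)).congr_fderiv ?_
    ext u
    simp only [id_eq, ContinuousLinearMap.comp_id, smul_apply, coe_innerSL_apply, nsmul_eq_mul,
      Nat.cast_ofNat, smul_eq_mul]
    ring
  have hquad' : HasFDerivAt (fun y => c • innerSL ℝ (y - y₀)) (c • innerSL ℝ) z :=
    ((innerSL ℝ).hasFDerivAt.comp z ((hasFDerivAt_id z).sub_const y₀)).const_smul c
  have := hmax.second_fderiv_self_nonpos (hf.mono fun y hy => hy.sub (hquad y)) (hB.sub hquad') v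
  simp only [sub_apply, smul_apply, smul_eq_mul, sub_nonpos] at this
  rwa [innerSL_apply_apply, real_inner_self_eq_norm_sq] at this

end SecondDerivative

section Hessian

open Matrix

theorem Matrix.IsHermitian.det_le_pow_of_dotProduct_mulVec_le {ι : Type*} [Fintype ι]
    [DecidableEq ι] {A : Matrix ι ι ℝ} (hA : A.IsHermitian) {c : ℝ}
    (h0 : ∀ x, 0 ≤ x ⬝ᵥ A *ᵥ x) (hc : ∀ x, x ⬝ᵥ A *ᵥ x ≤ c * (x ⬝ᵥ x)) :
    A.det ≤ c ^ Fintype.card ι := by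
  have heig : ∀ i, hA.eigenvalues i
      = ⇑(hA.eigenvectorBasis i) ⬝ᵥ A *ᵥ ⇑(hA.eigenvectorBasis i) := by
    intro i
    simpa using hA.eigenvalues_eq i
  have hunit : ∀ i, ⇑(hA.eigenvectorBasis i) ⬝ᵥ ⇑(hA.eigenvectorBasis i) = 1 := by
    intro i
    have := real_inner_self_eq_norm_sq (hA.eigenvectorBasis i)
    rwa [EuclideanSpace.inner_eq_star_dotProduct, hA.eigenvectorBasis.orthonormal.1 i, one_pow,
      star_trivial] at this
  have hbound : ∀ i, 0 ≤ hA.eigenvalues i ∧ hA.eigenvalues i ≤ c := fun i =>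
    ⟨heig i ▸ h0 _, heig i ▸ (hc _).trans_eq (by rw [hunit i, mul_one])⟩
  rw [hA.det_eq_prod_eigenvalues]
  simp only [Real.ringHom_apply]
  calc ∏ i, hA.eigenvalues i ≤ ∏ _i : ι, c :=
        Finset.prod_le_prod (fun i _ => (hbound i).1) (fun i _ => (hbound i).2)
    _ = c ^ Fintype.card ι := by simp

theorem hessDet_le_pow {n : ℕ} {w : EuclideanSpace ℝ (Fin n) → ℝ} {z : EuclideanSpace ℝ (Fin n)}
    {c : ℝ} (hw : ContDiffAt ℝ 2 w z) (h0 : ∀ v, 0 ≤ fderiv ℝ (fderiv ℝ w) z v v)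
    (hc : ∀ v, fderiv ℝ (fderiv ℝ w) z v v ≤ c * ‖v‖ ^ 2) : hessDet w z ≤ c ^ n := by
  set B := fderiv ℝ (fderiv ℝ w) z
  let b := (EuclideanSpace.basisFun (Fin n) ℝ).toBasis
  set A := LinearMap.toMatrix₂ b b B.toLinearMap₁₂
  have hsymm : IsSymmSndFDerivAt ℝ w z := hw.isSymmSndFDerivAt (by simp)
  have hdiff : DifferentiableAt ℝ (fderiv ℝ w) z :=
    (hw.fderiv_right (m := 1) le_rfl).differentiableAt one_ne_zero
  have hA : hessDet w z = A.det := by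
    unfold hessDet
    congr 1
    ext i j
    rw [Matrix.of_apply, fderiv_clm_apply hdiff (differentiableAt_const _)]
    simp only [fderiv_fun_const, Pi.zero_apply, ContinuousLinearMap.comp_zero, zero_add,
      ContinuousLinearMap.flip_apply, LinearMap.toMatrix₂_apply, OrthonormalBasis.coe_toBasis,
      EuclideanSpace.basisFun_apply, ContinuousLinearMap.toLinearMap₁₂_apply_apply_apply, A, b]
    rfl
  have hquad : ∀ x, x ⬝ᵥ A *ᵥ x = B (b.equivFun.symm x) (b.equivFun.symm x) := fun x => by
    simpa using dotProduct_toMatrix₂_mulVec b b B.toLinearMap₁₂ x x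
  have hnorm : ∀ x, ‖b.equivFun.symm x‖ ^ 2 = x ⬝ᵥ x := fun x => by
    simp only [b, EuclideanSpace.basisFun_toBasis, PiLp.basisFun_equivFun]
    rw [← real_inner_self_eq_norm_sq, EuclideanSpace.inner_toLp_toLp, star_trivial]
    rfl
  have hAh : A.IsHermitian := by
    ext i j
    simp only [A, conjTranspose_apply, LinearMap.toMatrix₂_apply, star_trivial]
    exact hsymm _ _
  calc hessDet w z = A.det := hA
    _ ≤ c ^ Fintype.card (Fin n) := hAh.det_le_pow_of_dotProduct_mulVec_le
        (fun x => (hquad x).symm ▸ h0 _) (fun x => hquad x ▸ hnorm x ▸ hc _)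
    _ = c ^ n := by rw [Fintype.card_fin]

end Hessian

theorem IsOpen.exists_mem_frontier_isMaxOn {X α : Type*} [TopologicalSpace X] [LinearOrder α]
    [TopologicalSpace α] [ClosedIciTopology α] {U : Set X} {f : X → α} (hU : IsOpen U)
    (hc : IsCompact (closure U)) (hne : U.Nonempty) (hf : ContinuousOn f (closure U))
    (hloc : ∀ z ∈ U, ¬IsLocalMax f z) : ∃ z ∈ frontier U, IsMaxOn f (closure U) z := by
  obtain ⟨z, hz, hmax⟩ := hc.exists_isMaxOn (hne.mono subset_closure) hf
  refine ⟨z, hU.frontier_eq ▸ ⟨hz, fun hzU => hloc z hzU ?_⟩, hmax⟩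
  exact (hmax.on_subset subset_closure).isLocalMax (hU.mem_nhds hzU)

theorem not_isLocalMax_sub_sq_norm {n : ℕ} {w : EuclideanSpace ℝ (Fin n) → ℝ}
    {s : Set (EuclideanSpace ℝ (Fin n))} {z y₀ : EuclideanSpace ℝ (Fin n)} {c lam : ℝ}
    (hs : s ∈ 𝓝 z) (hconv : ConvexOn ℝ s w) (hw : ContDiffAt ℝ 2 w z) (hdet : lam ≤ hessDet w z)
    (hc : c ^ n < lam) : ¬IsLocalMax (fun y => w y - c / 2 * ‖y - y₀‖ ^ 2) z := by
  intro hmax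
  have hderiv : ∀ᶠ y in 𝓝 z, HasFDerivAt w (fderiv ℝ w y) y :=
    (hw.eventually (by simp)).mono fun y hy => (hy.differentiableAt two_ne_zero).hasFDerivAt
  have hB : HasFDerivAt (fderiv ℝ w) (fderiv ℝ (fderiv ℝ w) z) z :=
    ((hw.fderiv_right (m := 1) le_rfl).differentiableAt one_ne_zero).hasFDerivAt
  have := hessDet_le_pow hw (hconv.second_fderiv_self_nonneg hs hderiv hB)
    (hmax.second_fderiv_self_le_of_sub_sq_norm hderiv hB)
  linarith

theorem barrier_of_pow_lt {n : ℕ} {Ω : Set (EuclideanSpace ℝ (Fin n))}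
    (hΩb : Bornology.IsBounded Ω) (hΩo : IsOpen Ω) {y₀ : EuclideanSpace ℝ (Fin n)} {r : ℝ}
    (hr : 0 < r) (hball : ball y₀ r ⊆ Ω) {w : EuclideanSpace ℝ (Fin n) → ℝ}
    (hcont : ContinuousOn w (closure Ω)) (hconv : ConvexOn ℝ Ω w) (hC2 : ContDiffOn ℝ 2 w Ω)
    {lam c : ℝ} (hdet : ∀ y ∈ Ω, lam ≤ hessDet w y) (hc0 : 0 ≤ c) (hc : c ^ n < lam) :
    w y₀ ≤ sSup (w '' frontier Ω) - 1 / 2 * c * r ^ 2 := by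
  have hy₀ : y₀ ∈ Ω := hball (mem_ball_self hr)
  obtain ⟨z, hzfr, hzmax⟩ := hΩo.exists_mem_frontier_isMaxOn
    (f := fun y => w y - c / 2 * ‖y - y₀‖ ^ 2) hΩb.isCompact_closure ⟨y₀, hy₀⟩
    (hcont.sub (by fun_prop)) fun z hz => not_isLocalMax_sub_sq_norm (hΩo.mem_nhds hz) hconv
      (hC2.contDiffAt (hΩo.mem_nhds hz)) (hdet z hz) hc
  have hzr : r ≤ ‖z - y₀‖ := by
    by_contra! h
    exact (hΩo.frontier_eq ▸ hzfr).2 (hball (mem_ball_iff_norm.2 h))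
  have hwz : w z ≤ sSup (w '' frontier Ω) := by
    refine le_csSup ?_ (mem_image_of_mem w hzfr)
    exact ((hΩb.isCompact_closure.of_isClosed_subset isClosed_frontier frontier_subset_closure
      ).image_of_continuousOn (hcont.mono frontier_subset_closure)).bddAbove
  have hmax : w y₀ - c / 2 * ‖y₀ - y₀‖ ^ 2 ≤ w z - c / 2 * ‖z - y₀‖ ^ 2 :=
    hzmax (subset_closure hy₀)
  have hquad : c / 2 * r ^ 2 ≤ c / 2 * ‖z - y₀‖ ^ 2 := by gcongr
  rw [sub_self, norm_zero] at hmax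
  linarith

theorem monge_ampere_barrier_general (n : ℕ) (hn : 1 ≤ n)
    (Ω : Set (EuclideanSpace ℝ (Fin n))) (hΩb : Bornology.IsBounded Ω)
    (hΩo : IsOpen Ω)
    (y₀ : EuclideanSpace ℝ (Fin n)) (r : ℝ) (hr : 0 < r)
    (hball : Metric.ball y₀ r ⊆ Ω)
    (w : EuclideanSpace ℝ (Fin n) → ℝ) (hcont : ContinuousOn w (closure Ω))
    (hconv : ConvexOn ℝ Ω w) (hC2 : ContDiffOn ℝ 2 w Ω)
    (lam : ℝ) (hlam : 0 < lam) (hdet : ∀ y ∈ Ω, lam ≤ hessDet w y) :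
    w y₀ ≤ sSup (w '' frontier Ω) - (1 / 2) * lam ^ ((1 : ℝ) / n) * r ^ 2 := by
  set M := sSup (w '' frontier Ω)
  set c₀ := lam ^ ((1 : ℝ) / n) with hc₀_def
  have hc₀ : 0 < c₀ := Real.rpow_pos_of_pos hlam _
  have hpow : ∀ c ∈ Ioo 0 c₀, c ^ n < lam := fun c hc =>
    calc c ^ n < c₀ ^ n := pow_lt_pow_left₀ hc.2 hc.1.le (by omega)
      _ = lam := by rw [hc₀_def, one_div, Real.rpow_inv_natCast_pow hlam.le (by omega)]
  have hlim : Tendsto (fun c => M - 1 / 2 * c * r ^ 2) (𝓝[<] c₀) (𝓝 (M - 1 / 2 * c₀ * r ^ 2)) :=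
    ((by fun_prop : Continuous fun c : ℝ => M - 1 / 2 * c * r ^ 2).tendsto c₀).mono_left
      nhdsWithin_le_nhds
  refine ge_of_tendsto hlim ?_
  filter_upwards [Ioo_mem_nhdsLT hc₀] with c hc
  exact barrier_of_pow_lt hΩb hΩo hr hball hcont hconv hC2 hdet hc.1.le (hpow c hc)

/-- Barrier estimate via the comparison principle for the real Monge–Ampère operator:
if `w` is continuous on the closure of a bounded convex open set `Ω`, convex and `C²`
on `Ω`, with `det D²w ≥ λ > 0` on `Ω`, and `B(y₀, r) ⊆ Ω`, then
`w(y₀) ≤ sup_{∂Ω} w − (1/2) λ^{1/n} r²`. -/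
theorem monge_ampere_barrier (n : ℕ) (hn : 1 ≤ n)
    (Ω : Set (EuclideanSpace ℝ (Fin n))) (hΩb : Bornology.IsBounded Ω)
    (hΩc : Convex ℝ Ω) (hΩo : IsOpen Ω)
    (y₀ : EuclideanSpace ℝ (Fin n)) (hy₀ : y₀ ∈ Ω) (r : ℝ) (hr : 0 < r)
    (hball : Metric.ball y₀ r ⊆ Ω)
    (w : EuclideanSpace ℝ (Fin n) → ℝ) (hcont : ContinuousOn w (closure Ω))
    (hconv : ConvexOn ℝ Ω w) (hC2 : ContDiffOn ℝ 2 w Ω)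
    (lam : ℝ) (hlam : 0 < lam) (hdet : ∀ y ∈ Ω, lam ≤ hessDet w y) :
    w y₀ ≤ sSup (w '' frontier Ω) - (1 / 2) * lam ^ ((1 : ℝ) / n) * r ^ 2 :=
  monge_ampere_barrier_general n hn Ω hΩb hΩo y₀ r hr hball w hcont hconv hC2 lam hlam hdet
end

section
/- Let n ≥ 1, let Ω* ⊂ ℝⁿ be a bounded convex open set, let c ∈ ℝⁿ, c_X ∈ ℝ, and let v : ℝⁿ → ℝ be continuous. Suppose w : ℝⁿ → ℝ is a smooth convex function such that the gradient map ∇w : ℝⁿ → Ω* is a C^∞ diffeomorphism onto Ω*, and such that det D²w(x) = exp(−c_X − v(x) − ⟨c, ∇w(x)⟩) for all x ∈ ℝⁿ. Then for every coordinate i = 1, …, n, ∫_{ℝⁿ} (∂w/∂x_i)(x) · exp(−v(x)) dx = exp(c_X) · ∫_{Ω*} y_i e^{⟨c, y⟩} dy. In particular, if ∫_{Ω*} y_i e^{⟨c,y⟩} dy = 0 for all i, then ∫_{ℝⁿ} ∇w(x) e^{−v(x)} dx = 0. -/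
open MeasureTheory
open scoped RealInnerProductSpace

/-!
Under `y = ∇w(x)` the Jacobian is `det D²w`, which the Monge–Ampère equation turns into
`e^{-c_X - v(x) - ⟨c, y⟩}`. Hence `e^{-v(x)} dx = e^{c_X} e^{⟨c,y⟩} dy` as measures transported
by `∇w` onto `Ω*`, and integrating `yᵢ` against both sides gives the identity.
-/

lemma integral_piLp_eq_zero_of_forall_eval {X ι : Type*} [MeasurableSpace X] {μ : Measure X}
    [Fintype ι] {E : ι → Type*} [∀ i, NormedAddCommGroup (E i)] [∀ i, NormedSpace ℝ (E i)]
    [∀ i, CompleteSpace (E i)] {q : ENNReal} [Fact (1 ≤ q)] {f : X → PiLp q E}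
    (h : ∀ i, ∫ x, f x i ∂μ = 0) : ∫ x, f x ∂μ = 0 := by
  by_cases hf : Integrable f μ
  · ext i
    rw [eval_integral_piLp (integrable_piLp_iff.1 hf), h i]
    rfl
  · exact integral_undef hf

lemma ContDiff.differentiable_gradient {F : Type*} [NormedAddCommGroup F]
    [InnerProductSpace ℝ F] [CompleteSpace F] {w : F → ℝ} (hw : ContDiff ℝ 2 w) :
    Differentiable ℝ (gradient w) :=
  (InnerProductSpace.toDual ℝ F).symm.differentiable.comp
    ((hw.fderiv_right (m := 1) le_rfl).differentiable one_ne_zero)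

lemma gradient_apply_eq_fderiv_single {n : ℕ} (w : EuclideanSpace ℝ (Fin n) → ℝ)
    (y : EuclideanSpace ℝ (Fin n)) (i : Fin n) :
    gradient w y i = fderiv ℝ w y (EuclideanSpace.single i 1) := by
  rw [← InnerProductSpace.toDual_symm_apply (𝕜 := ℝ), gradient, EuclideanSpace.inner_single_right]
  simp

lemma hessDet_eq_det_fderiv_gradient {n : ℕ} {w : EuclideanSpace ℝ (Fin n) → ℝ}
    {x : EuclideanSpace ℝ (Fin n)} (hw : DifferentiableAt ℝ (gradient w) x) :
    hessDet w x = (fderiv ℝ (gradient w) x).det := by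
  let b := (EuclideanSpace.basisFun (Fin n) ℝ).toBasis
  have hentry : ∀ i j : Fin n, (fderiv ℝ (gradient w) x (EuclideanSpace.single j 1)) i
      = fderiv ℝ (fun y => fderiv ℝ w y (EuclideanSpace.single i 1)) x
          (EuclideanSpace.single j 1) := by
    intro i j
    have hcoord : fderiv ℝ (fun y => gradient w y i) x
        = (EuclideanSpace.proj i).comp (fderiv ℝ (gradient w) x) :=
      ((EuclideanSpace.proj (𝕜 := ℝ) i).hasFDerivAt.comp x hw.hasFDerivAt).fderiv
    simp_rw [gradient_apply_eq_fderiv_single] at hcoord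
    rw [hcoord]
    rfl
  have hmatrix : LinearMap.toMatrix b b (fderiv ℝ (gradient w) x).toLinearMap
      = (Matrix.of fun i j : Fin n =>
          fderiv ℝ (fun y => fderiv ℝ w y (EuclideanSpace.single j 1)) x
            (EuclideanSpace.single i 1)).transpose := by
    ext i j
    simpa [b, LinearMap.toMatrix_apply] using hentry i j
  rw [ContinuousLinearMap.det, ← LinearMap.det_toMatrix b, hmatrix, Matrix.det_transpose, hessDet]

theorem integral_range_gradient_eq_integral_abs_hessDet_smul {n : ℕ} {F : Type*}
    [NormedAddCommGroup F] [NormedSpace ℝ F] {w : EuclideanSpace ℝ (Fin n) → ℝ}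
    (hw : Differentiable ℝ (gradient w)) (hinj : Function.Injective (gradient w))
    (g : EuclideanSpace ℝ (Fin n) → F) :
    ∫ y in Set.range (gradient w), g y = ∫ x, |hessDet w x| • g (gradient w x) := by
  rw [← Set.image_univ, integral_image_eq_integral_abs_det_fderiv_smul volume
    MeasurableSet.univ (fun x _ => (hw x).hasFDerivAt.hasFDerivWithinAt) hinj.injOn g,
    setIntegral_univ]
  simp_rw [hessDet_eq_det_fderiv_gradient (hw _)]

theorem monge_ampere_futaki_identity_general (n : ℕ)
    (Ωs : Set (EuclideanSpace ℝ (Fin n)))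
    (c : EuclideanSpace ℝ (Fin n)) (cX : ℝ)
    (v : EuclideanSpace ℝ (Fin n) → ℝ)
    (w : EuclideanSpace ℝ (Fin n) → ℝ)
    (hw : ContDiff ℝ (⊤ : ℕ∞) w)
    (hbij : Set.BijOn (fun x => gradient w x) Set.univ Ωs)
    (hMA : ∀ x, hessDet w x = Real.exp (-cX - v x - ⟪c, gradient w x⟫)) :
    (∀ i : Fin n,
      ∫ x, (gradient w x) i * Real.exp (-(v x))
        = Real.exp cX * ∫ y in Ωs, (y i) * Real.exp ⟪c, y⟫) ∧
    ((∀ i : Fin n, ∫ y in Ωs, (y i) * Real.exp ⟪c, y⟫ = 0) →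
      ∫ x, Real.exp (-(v x)) • gradient w x = 0) := by
  have hgrad : Differentiable ℝ (gradient w) :=
    (hw.of_le (WithTop.coe_le_coe.2 le_top)).differentiable_gradient
  have hrange : Set.range (gradient w) = Ωs := Set.image_univ.symm.trans hbij.image_eq
  have hinj : Function.Injective (gradient w) := Set.injOn_univ.1 hbij.injOn
  have hmoment : ∀ i : Fin n, ∫ x, (gradient w x) i * Real.exp (-(v x))
      = Real.exp cX * ∫ y in Ωs, (y i) * Real.exp ⟪c, y⟫ := by
    intro i
    have hdensity : ∀ x, (gradient w x) i * Real.exp (-(v x)) = |hessDet w x| •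
        (Real.exp cX * ((gradient w x) i * Real.exp ⟪c, gradient w x⟫)) := by
      intro x
      have hexp : Real.exp (-cX - v x - ⟪c, gradient w x⟫) * Real.exp cX
          * Real.exp ⟪c, gradient w x⟫ = Real.exp (-(v x)) := by
        rw [← Real.exp_add, ← Real.exp_add]
        ring_nf
      rw [hMA, abs_of_pos (Real.exp_pos _), smul_eq_mul]
      linear_combination (-(gradient w x) i) * hexp
    rw [← integral_const_mul, ← hrange,
      integral_range_gradient_eq_integral_abs_hessDet_smul hgrad hinj]
    simp_rw [hdensity]
  refine ⟨hmoment, fun hzero => integral_piLp_eq_zero_of_forall_eval fun i => ?_⟩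
  simp_rw [PiLp.smul_apply, smul_eq_mul, mul_comm (Real.exp _)]
  rw [hmoment i, hzero i, mul_zero]

/-- Vector-valued change of variables `y = ∇w(x)` for a smooth convex solution of the
real Monge–Ampère equation `det D²w = exp(−c_X − v − ⟨c, ∇w⟩)` whose gradient is a
diffeomorphism onto the bounded convex open set `Ω*`: for each coordinate `i`,
`∫ (∂w/∂xᵢ) e^{−v} dx = e^{c_X} ∫_{Ω*} yᵢ e^{⟨c,y⟩} dy`; in particular if all these
moments vanish then `∫ ∇w · e^{−v} dx = 0`. -/
theorem monge_ampere_futaki_identity (n : ℕ) (hn : 1 ≤ n)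
    (Ωs : Set (EuclideanSpace ℝ (Fin n))) (hΩb : Bornology.IsBounded Ωs)
    (hΩc : Convex ℝ Ωs) (hΩo : IsOpen Ωs)
    (c : EuclideanSpace ℝ (Fin n)) (cX : ℝ)
    (v : EuclideanSpace ℝ (Fin n) → ℝ) (hv : Continuous v)
    (w : EuclideanSpace ℝ (Fin n) → ℝ)
    (hw : ContDiff ℝ (⊤ : ℕ∞) w) (hwconv : ConvexOn ℝ Set.univ w)
    (hbij : Set.BijOn (fun x => gradient w x) Set.univ Ωs)
    (hdiffeo : ∃ g : EuclideanSpace ℝ (Fin n) → EuclideanSpace ℝ (Fin n),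
        ContDiffOn ℝ (⊤ : ℕ∞) g Ωs ∧ (∀ x, g (gradient w x) = x) ∧
        ∀ y ∈ Ωs, gradient w (g y) = y)
    (hMA : ∀ x, hessDet w x = Real.exp (-cX - v x - ⟪c, gradient w x⟫)) :
    (∀ i : Fin n,
      ∫ x, (gradient w x) i * Real.exp (-(v x))
        = Real.exp cX * ∫ y in Ωs, (y i) * Real.exp ⟪c, y⟫) ∧
    ((∀ i : Fin n, ∫ y in Ωs, (y i) * Real.exp ⟪c, y⟫ = 0) →
      ∫ x, Real.exp (-(v x)) • gradient w x = 0) :=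
  monge_ampere_futaki_identity_general n Ωs c cX v w hw hbij hMA
end

section
/- Let n ≥ 1 and let Ω* ⊂ ℝⁿ be a bounded convex open set with 0 ∈ Ω*. Then there exists a unique vector c ∈ ℝⁿ such that ∫_{Ω*} y_i e^{⟨c, y⟩} dy = 0 for every coordinate i = 1, …, n. -/
/-!
Minimize `F c = ∫_Ω e^⟪c, y⟫ dy`. It is differentiable with gradient `∫_Ω e^⟪c, y⟫ y dy`, and
coercive: if `Ω` contains the ball of radius `r` about `0`, then `F c ≥ C e^(r ‖c‖ / 4)`, from the
ball of radius `r / 4` about the point at distance `r / 2` from `0` in the direction of `c`. So `F`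
has a global minimum, where the gradient vanishes. The gradient is strictly monotone:
`⟪c - c', ∇F c - ∇F c'⟫ = ∫_Ω (e^a - e^b) (a - b) dy` with `a = ⟪c, y⟫`, `b = ⟪c', y⟫`, and the
integrand is positive off the hyperplane `⟪c - c', y⟫ = 0`, a null set. Hence the critical point is
unique.
-/

open MeasureTheory Bornology Filter Metric Real Set Topology
open scoped RealInnerProductSpace

theorem Continuous.integrableOn_of_isBounded {X F : Type*} [MetricSpace X] [ProperSpace X]
    [MeasurableSpace X] [OpensMeasurableSpace X] [NormedAddCommGroup F] {μ : Measure X}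
    [IsFiniteMeasureOnCompacts μ] {f : X → F} {s : Set X} (hf : Continuous f)
    (hs : IsBounded s) : IntegrableOn f s μ :=
  (hf.continuousOn.integrableOn_compact hs.isCompact_closure).mono_set subset_closure

theorem Real.exp_sub_exp_mul_sub_pos {a b : ℝ} (h : a ≠ b) : 0 < (exp a - exp b) * (a - b) := by
  rcases h.lt_or_gt with h | h
  · exact mul_pos_of_neg_of_neg (sub_neg.2 (exp_lt_exp.2 h)) (sub_neg.2 h)
  · exact mul_pos (sub_pos.2 (exp_lt_exp.2 h)) (sub_pos.2 h)

theorem Real.exp_sub_exp_mul_sub_nonneg (a b : ℝ) : 0 ≤ (exp a - exp b) * (a - b) := by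
  rcases eq_or_ne a b with rfl | h
  · simp
  · exact (exp_sub_exp_mul_sub_pos h).le

theorem EuclideanSpace.integral_apply {ι X : Type*} [Fintype ι] [MeasurableSpace X]
    {μ : Measure X} {f : X → EuclideanSpace ℝ ι} (hf : Integrable f μ) (i : ι) :
    (∫ x, f x ∂μ) i = ∫ x, f x i ∂μ :=
  ((EuclideanSpace.proj i).integral_comp_comm hf).symm

theorem EuclideanSpace.integral_eq_zero_iff {ι X : Type*} [Fintype ι] [MeasurableSpace X]
    {μ : Measure X} {f : X → EuclideanSpace ℝ ι} (hf : Integrable f μ) :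
    ∫ x, f x ∂μ = 0 ↔ ∀ i, ∫ x, f x i ∂μ = 0 := by
  simp only [← EuclideanSpace.integral_apply hf, WithLp.ext_iff, funext_iff]
  rfl

theorem hasFDerivAt_exp_inner {E : Type*} [NormedAddCommGroup E] [InnerProductSpace ℝ E]
    (y c : E) :
    HasFDerivAt (fun c => exp ⟪c, y⟫) (innerSL ℝ (exp ⟪c, y⟫ • y)) c := by
  simpa only [innerSL_apply_apply, real_inner_comm, map_smul] using
    (innerSL ℝ y).hasFDerivAt.exp

section ExpInner

variable {E : Type*} [NormedAddCommGroup E] [InnerProductSpace ℝ E] [FiniteDimensional ℝ E]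
  [MeasurableSpace E] [BorelSpace E] (μ : Measure E) {s : Set E}

theorem hasFDerivAt_setIntegral_exp_inner [IsFiniteMeasureOnCompacts μ] (hs : IsBounded s)
    (c₀ : E) :
    HasFDerivAt (fun c => ∫ y in s, exp ⟪c, y⟫ ∂μ)
      (innerSL ℝ (∫ y in s, exp ⟪c₀, y⟫ • y ∂μ)) c₀ := by
  obtain ⟨R, hR⟩ := hs.subset_closedBall 0
  have hbound : ∀ y ∈ closedBall (0 : E) R, ∀ c ∈ ball c₀ 1,
      ‖innerSL ℝ (exp ⟪c, y⟫ • y)‖ ≤ exp ((‖c₀‖ + 1) * R) * R := by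
    intro y hy c hc
    rw [mem_closedBall_zero_iff] at hy
    have hc : ‖c‖ ≤ ‖c₀‖ + 1 := by
      linarith [norm_le_norm_add_norm_sub' c c₀, mem_ball_iff_norm.1 hc]
    have hexp : exp ⟪c, y⟫ ≤ exp ((‖c₀‖ + 1) * R) :=
      exp_le_exp.2 <| (real_inner_le_norm c y).trans <|
        mul_le_mul hc hy (norm_nonneg y) (by positivity)
    rw [innerSL_apply_norm, norm_smul, norm_of_nonneg (exp_pos _).le]
    exact mul_le_mul hexp hy (norm_nonneg y) (exp_pos _).le
  have key := hasFDerivAt_integral_of_dominated_of_fderiv_le (μ := μ.restrict s)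
    (F := fun c y => exp ⟪c, y⟫) (F' := fun c y => innerSL ℝ (exp ⟪c, y⟫ • y))
    (ball_mem_nhds c₀ one_pos)
    (Eventually.of_forall fun c => (by fun_prop : Continuous _).aestronglyMeasurable)
    ((by fun_prop : Continuous fun y : E => exp ⟪c₀, y⟫).integrableOn_of_isBounded hs)
    (by fun_prop : Continuous fun y : E => innerSL ℝ (exp ⟪c₀, y⟫ • y)).aestronglyMeasurable
    (ae_restrict_of_ae_restrict_of_subset hR <|
      (ae_restrict_mem measurableSet_closedBall).mono hbound)
    (continuous_const.integrableOn_of_isBounded hs)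
    (Eventually.of_forall fun y c _ => hasFDerivAt_exp_inner y c)
  rwa [(innerSL ℝ).integral_comp_comm
    ((by fun_prop : Continuous fun y : E => exp ⟪c₀, y⟫ • y).integrableOn_of_isBounded hs)] at key

theorem measureReal_ball_mul_exp_le_setIntegral_exp_inner [μ.IsAddHaarMeasure]
    (hs : IsBounded s) {r : ℝ} (hr : 0 < r) (hrs : ball 0 r ⊆ s) (c : E) :
    μ.real (ball 0 (r / 4)) * exp (r / 4 * ‖c‖) ≤ ∫ y in s, exp ⟪c, y⟫ ∂μ := by
  -- no case split on `c = 0` is needed: then `p = 0`, since `r / 2 / 0 = 0`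
  set p : E := (r / 2 / ‖c‖) • c
  have hp : ‖p‖ ≤ r / 2 := by
    rw [norm_smul, norm_div, norm_norm, Real.norm_of_nonneg (by positivity)]
    rcases eq_or_ne ‖c‖ 0 with hc | hc
    · simp only [hc, mul_zero]
      positivity
    · rw [div_mul_cancel₀ _ hc]
  have hcp : ⟪c, p⟫ = r / 2 * ‖c‖ := by
    rw [real_inner_smul_right, real_inner_self_eq_norm_sq]
    rcases eq_or_ne ‖c‖ 0 with hc | hc
    · simp [hc]
    · field_simp
  have hball : ball p (r / 4) ⊆ s := fun y hy => hrs <| by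
    rw [mem_ball_zero_iff]
    linarith [norm_le_norm_add_norm_sub' y p, mem_ball_iff_norm.1 hy]
  have hlower : ∀ y ∈ ball p (r / 4), r / 4 * ‖c‖ ≤ ⟪c, y⟫ := fun y hy => by
    have hdev : |⟪c, y - p⟫| ≤ ‖c‖ * (r / 4) :=
      (abs_real_inner_le_norm c _).trans <|
        mul_le_mul_of_nonneg_left (mem_ball_iff_norm.1 hy).le (norm_nonneg c)
    have hsplit : ⟪c, y⟫ = ⟪c, p⟫ + ⟪c, y - p⟫ := by rw [← inner_add_right, add_sub_cancel]
    linarith [neg_abs_le ⟪c, y - p⟫]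
  have hint : IntegrableOn (fun y => exp ⟪c, y⟫) s μ :=
    (by fun_prop : Continuous fun y : E => exp ⟪c, y⟫).integrableOn_of_isBounded hs
  calc μ.real (ball 0 (r / 4)) * exp (r / 4 * ‖c‖)
      = exp (r / 4 * ‖c‖) * μ.real (ball p (r / 4)) := by
        rw [measureReal_def, measureReal_def, μ.addHaar_ball_center p, mul_comm]
    _ ≤ ∫ y in ball p (r / 4), exp ⟪c, y⟫ ∂μ :=
        setIntegral_ge_of_const_le_real measurableSet_ball measure_ball_lt_top.ne
          (fun y hy => exp_le_exp.2 (hlower y hy)) (hint.mono_set hball)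
    _ ≤ ∫ y in s, exp ⟪c, y⟫ ∂μ :=
        setIntegral_mono_set hint (Eventually.of_forall fun y => (exp_pos _).le)
          hball.eventuallyLE

theorem tendsto_setIntegral_exp_inner_cocompact [μ.IsAddHaarMeasure] (hs : IsBounded s)
    (h0 : s ∈ 𝓝 0) :
    Tendsto (fun c => ∫ y in s, exp ⟪c, y⟫ ∂μ) (cocompact E) atTop := by
  obtain ⟨r, hr, hrs⟩ := Metric.mem_nhds_iff.1 h0
  have hV : 0 < μ.real (ball 0 (r / 4)) := by
    rw [measureReal_def]
    exact ENNReal.toReal_pos (measure_ball_pos μ 0 (by positivity)).ne' measure_ball_lt_top.ne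
  refine tendsto_atTop_mono (measureReal_ball_mul_exp_le_setIntegral_exp_inner μ hs hr hrs) ?_
  exact (tendsto_exp_atTop.comp
    (tendsto_norm_cocompact_atTop.const_mul_atTop (by positivity))).const_mul_atTop hV

theorem exists_setIntegral_exp_inner_smul_eq_zero [μ.IsAddHaarMeasure] (hs : IsBounded s)
    (h0 : s ∈ 𝓝 0) : ∃ c : E, ∫ y in s, exp ⟪c, y⟫ • y ∂μ = 0 := by
  have hderiv := hasFDerivAt_setIntegral_exp_inner μ hs
  obtain ⟨c, hmin⟩ := Continuous.exists_forall_le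
    (continuous_iff_continuousAt.2 fun c => (hderiv c).continuousAt)
    (tendsto_setIntegral_exp_inner_cocompact μ hs h0)
  refine ⟨c, norm_eq_zero.1 ?_⟩
  rw [← innerSL_apply_norm ℝ,
    IsLocalMin.hasFDerivAt_eq_zero (Eventually.of_forall hmin) (hderiv c), norm_zero]

theorem inner_sub_setIntegral_exp_inner_smul_sub_pos [μ.IsAddHaarMeasure] (hs : IsBounded s)
    (hso : IsOpen s) (hne : s.Nonempty) {c c' : E} (h : c ≠ c') :
    0 < ⟪c - c', (∫ y in s, exp ⟪c, y⟫ • y ∂μ) - ∫ y in s, exp ⟪c', y⟫ • y ∂μ⟫ := by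
  have hint (b : E) : Integrable (fun y => exp ⟪b, y⟫ • y) (μ.restrict s) :=
    (by fun_prop : Continuous fun y : E => exp ⟪b, y⟫ • y).integrableOn_of_isBounded hs
  set f : E → ℝ := fun y => (exp ⟪c, y⟫ - exp ⟪c', y⟫) * (⟪c, y⟫ - ⟪c', y⟫)
  have hf : ∫ y in s, f y ∂μ =
      ⟪c - c', (∫ y in s, exp ⟪c, y⟫ • y ∂μ) - ∫ y in s, exp ⟪c', y⟫ • y ∂μ⟫ := by
    rw [← integral_sub (hint c) (hint c'),
      ← integral_inner (f := fun y => exp ⟪c, y⟫ • y - exp ⟪c', y⟫ • y) ((hint c).sub (hint c'))]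
    congr 1 with y
    rw [← sub_smul, real_inner_smul_right, inner_sub_left]
  set H : Submodule ℝ E := LinearMap.ker (innerSL ℝ (c - c') : E →ₗ[ℝ] ℝ)
  have hH : H ≠ ⊤ := fun htop => sub_ne_zero.2 h <| inner_self_eq_zero.1 <|
    LinearMap.mem_ker.1 (htop ▸ Submodule.mem_top : c - c' ∈ H)
  rw [← hf, integral_pos_iff_support_of_nonneg (fun y => exp_sub_exp_mul_sub_nonneg _ _)
    ((by fun_prop : Continuous f).integrableOn_of_isBounded hs),
    Measure.restrict_apply' hso.measurableSet]
  calc 0 < μ s := hso.measure_pos μ hne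
    _ = μ (s \ H) := (measure_sdiff_null (μ.addHaar_submodule H hH)).symm
    _ ≤ μ (Function.support f ∩ s) := measure_mono fun y ⟨hys, hyH⟩ =>
      ⟨(exp_sub_exp_mul_sub_pos fun heq => hyH <| by
        simp [H, heq]).ne', hys⟩

theorem existsUnique_setIntegral_exp_inner_smul_eq_zero [μ.IsAddHaarMeasure] (hs : IsBounded s)
    (hso : IsOpen s) (h0 : (0 : E) ∈ s) : ∃! c : E, ∫ y in s, exp ⟪c, y⟫ • y ∂μ = 0 := by
  obtain ⟨c, hc⟩ := exists_setIntegral_exp_inner_smul_eq_zero μ hs (hso.mem_nhds h0)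
  refine ⟨c, hc, fun c' hc' => by_contra fun hne => ?_⟩
  have hpos := inner_sub_setIntegral_exp_inner_smul_sub_pos μ hs hso ⟨0, h0⟩ hne
  rw [hc, hc', sub_zero, inner_zero_right] at hpos
  exact hpos.false

end ExpInner

theorem exists_unique_soliton_vector_general (n : ℕ)
    (Ωs : Set (EuclideanSpace ℝ (Fin n))) (hΩb : Bornology.IsBounded Ωs)
    (hΩo : IsOpen Ωs)
    (h0 : (0 : EuclideanSpace ℝ (Fin n)) ∈ Ωs) :
    ∃! c : EuclideanSpace ℝ (Fin n),
      ∀ i : Fin n, ∫ y in Ωs, (y i) * Real.exp ⟪c, y⟫ = 0 := by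
  refine (existsUnique_congr fun c => ?_).1
    (existsUnique_setIntegral_exp_inner_smul_eq_zero volume hΩb hΩo h0)
  have hint : Integrable (fun y => exp ⟪c, y⟫ • y) (volume.restrict Ωs) :=
    (by fun_prop : Continuous fun y : EuclideanSpace ℝ (Fin n) => exp ⟪c, y⟫ • y)
      |>.integrableOn_of_isBounded hΩb
  rw [EuclideanSpace.integral_eq_zero_iff hint]
  simp only [PiLp.smul_apply, smul_eq_mul, mul_comm]

/-- For a bounded convex open set `Ω* ⊆ ℝⁿ` containing the origin, there is a unique
vector `c ∈ ℝⁿ` such that `∫_{Ω*} yᵢ e^{⟨c,y⟩} dy = 0` for every coordinate `i`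
(the soliton vector field coefficients, i.e. the vanishing of the modified Futaki
functional). -/
theorem exists_unique_soliton_vector (n : ℕ) (hn : 1 ≤ n)
    (Ωs : Set (EuclideanSpace ℝ (Fin n))) (hΩb : Bornology.IsBounded Ωs)
    (hΩc : Convex ℝ Ωs) (hΩo : IsOpen Ωs)
    (h0 : (0 : EuclideanSpace ℝ (Fin n)) ∈ Ωs) :
    ∃! c : EuclideanSpace ℝ (Fin n),
      ∀ i : Fin n, ∫ y in Ωs, (y i) * Real.exp ⟪c, y⟫ = 0 :=
  exists_unique_soliton_vector_general n Ωs hΩb hΩo h0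
end
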